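/- arXiv:1301.3803 — 9 statements merged into one kernel-verified Lean document; each statement's English description precedes it below -/
import Mathlib

section
/- (Nelson Lemma) In any rack R, the map x ↦ x ▷ x is injective, and the map x ↦ x ◁ x is injective; in particular, if R is finite both maps are bijective. -/
/-- **Nelson Lemma.** In any rack `R` (binary operation `act` (`▷`) which is
self-distributive and whose left translations are bijective, with inverse
operation `tl` (`◁`), so that `x ▷ (y ◁ x) = y` and `(x ▷ y) ◁ x = y`),
the maps `x ↦ x ▷ x` and `x ↦ x ◁ x` are injective; in particular,
if `R` is finite both maps are bijective. -/
theorem nelson_lemma {R : Type*} (act tl : R → R → R)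
    (hsd : ∀ x y z, act x (act y z) = act (act x y) (act x z))
    (hli : ∀ x y, act x (tl y x) = y)
    (hri : ∀ x y, tl (act x y) x = y) :
    (Function.Injective fun x => act x x) ∧
    (Function.Injective fun x => tl x x) ∧
    (Finite R →
      (Function.Bijective fun x => act x x) ∧
      (Function.Bijective fun x => tl x x)) := by
  -- left translations are injective
  have hinj : ∀ x : R, Function.Injective (act x) := by
    intro x a b h
    have := congrArg (fun z => tl z x) h
    simpa [hri] using this
  -- act x = act (act x x)
  have hfun : ∀ x w : R, act x w = act (act x x) w := by
    intro x w
    have h1 : act x (act x (tl w x)) = act (act x x) (act x (tl w x)) := hsd x x (tl w x)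
    simpa [hli] using h1
  -- injectivity of the squaring map
  have hsq : Function.Injective fun x => act x x := by
    intro x y h
    simp only at h
    have hxy : ∀ w, act x w = act y w := by
      intro w
      rw [hfun x w, hfun y w, h]
    have : act x x = act x y := by rw [h, hxy y]
    exact hinj x this
  -- (x ◁ x) ▷ (x ◁ x) = x
  have hg : ∀ x : R, act (tl x x) (tl x x) = x := by
    intro x
    apply hinj x
    have := (hsd x (tl x x) (tl x x)).symm
    rw [hli] at this; exact this.symm
  -- x ↦ x ◁ x is injective
  have htl : Function.Injective fun x => tl x x := by
    intro x y h
    simp only at h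
    rw [← hg x, ← hg y, h]
  -- surjectivity of both squares
  have hsurj : Function.Surjective fun x => act x x := fun x => ⟨tl x x, hg x⟩
  have htlsurj : Function.Surjective fun x => tl x x := by
    intro y
    refine ⟨act y y, ?_⟩
    apply hsq
    simpa using hg (act y y)
  exact ⟨hsq, htl, fun _ => ⟨⟨hsq, hsurj⟩, ⟨htl, htlsurj⟩⟩⟩
end

section
/- Let R be a finite rack whose underlying set carries an arbitrary group structure G (no compatibility with the rack operations is assumed). Define ψ, φ: G × G → G by ψ(B,A) = B·A·B⁻¹·(B ▷ A)⁻¹ and φ(B,A) = A·B·(A ◁ B)⁻¹·B⁻¹. Then (ψ, φ) is a framed Reidemeister pair for the crossed module (id: G → G, conjugation action). Moreover, if R is a quandle then ψ(X,X) = 1 for all X ∈ G, so (ψ, φ) is an unframed Reidemeister pair. -/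
/-- Given a crossed module `(pd : E → G, tr)`, a pair of functions
`ψ φ : G × G → E` is an *unframed Reidemeister pair* if:
(R1) `ψ(X,X) = 1`;
(R2) `φ(X,Y)·ψ(X,Z) = 1` where `Z = X⁻¹ ∂(φ(X,Y))⁻¹ Y X`;
(R3) `φ(Y,X)·(Y ▷ φ(T,Z))·φ(T,Y) = (X ▷ φ(T,Y))·φ(T,X)·(T ▷ φ(V,W))`
where `Z = Y⁻¹ ∂(φ(Y,X))⁻¹ X Y`, `V = T⁻¹ ∂(φ(T,Y))⁻¹ Y T`,
`W = T⁻¹ ∂(φ(T,X))⁻¹ X T`. -/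
def IsUnframedReidemeisterPair {E G : Type*} [Group E] [Group G]
    (pd : E →* G) (tr : G → E → E) (ψ φ : G → G → E) : Prop :=
  (∀ X, ψ X X = 1) ∧
  (∀ X Y, φ X Y * ψ X (X⁻¹ * (pd (φ X Y))⁻¹ * Y * X) = 1) ∧
  (∀ X Y T,
    φ Y X * tr Y (φ T (Y⁻¹ * (pd (φ Y X))⁻¹ * X * Y)) * φ T Y =
      tr X (φ T Y) * φ T X *
        tr T (φ (T⁻¹ * (pd (φ T Y))⁻¹ * Y * T) (T⁻¹ * (pd (φ T X))⁻¹ * X * T)))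

/-- Given a crossed module `(pd : E → G, tr)`, a pair of functions
`ψ φ : G × G → E` is a *framed Reidemeister pair* if conditions (R2) and (R3)
above hold, and moreover (i) for each `Z ∈ G` the equation `∂(φ(A,Z))·A = Z`
has a unique solution `A = f(Z)`, and (ii) the map `g(A) = ∂(ψ(A,A))⁻¹·A`
satisfies `f ∘ g = g ∘ f = id`. -/
def IsFramedReidemeisterPair {E G : Type*} [Group E] [Group G]
    (pd : E →* G) (tr : G → E → E) (ψ φ : G → G → E) : Prop :=
  (∀ X Y, φ X Y * ψ X (X⁻¹ * (pd (φ X Y))⁻¹ * Y * X) = 1) ∧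
  (∀ X Y T,
    φ Y X * tr Y (φ T (Y⁻¹ * (pd (φ Y X))⁻¹ * X * Y)) * φ T Y =
      tr X (φ T Y) * φ T X *
        tr T (φ (T⁻¹ * (pd (φ T Y))⁻¹ * Y * T) (T⁻¹ * (pd (φ T X))⁻¹ * X * T))) ∧
  (∃ f : G → G,
    (∀ Z, pd (φ (f Z) Z) * f Z = Z) ∧
    (∀ Z A, pd (φ A Z) * A = Z → A = f Z) ∧
    (∀ A, f ((pd (ψ A A))⁻¹ * A) = A) ∧
    (∀ Z, (pd (ψ (f Z) (f Z)))⁻¹ * f Z = Z))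

/-- Let `R` be a finite rack whose underlying set carries an arbitrary group
structure `G`. With `ψ(B,A) = B·A·B⁻¹·(B ▷ A)⁻¹` and
`φ(B,A) = A·B·(A ◁ B)⁻¹·B⁻¹`, the pair `(ψ, φ)` is a framed Reidemeister pair
for the crossed module `(id : G → G, conjugation)`; moreover if `R` is a
quandle then `(ψ, φ)` is an unframed Reidemeister pair. -/
theorem rack_framed_reidemeister_pair {G : Type*} [Group G] [Finite G]
    (act tl : G → G → G)
    (hsd : ∀ x y z, act x (act y z) = act (act x y) (act x z))
    (hli : ∀ x y, act x (tl y x) = y)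
    (hri : ∀ x y, tl (act x y) x = y) :
    IsFramedReidemeisterPair (MonoidHom.id G) (fun g e => g * e * g⁻¹)
      (fun B A => B * A * B⁻¹ * (act B A)⁻¹)
      (fun B A => A * B * (tl A B)⁻¹ * B⁻¹) ∧
    ((∀ x, act x x = x) →
      IsUnframedReidemeisterPair (MonoidHom.id G) (fun g e => g * e * g⁻¹)
        (fun B A => B * A * B⁻¹ * (act B A)⁻¹)
        (fun B A => A * B * (tl A B)⁻¹ * B⁻¹)) := by
  -- injectivity of left translations
  have actinj : ∀ x : G, Function.Injective (act x) := by
    intro x a b h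
    have := congrArg (fun z => tl z x) h
    simpa [hri] using this
  -- act (a ▷ a) = act a
  have hsq : ∀ a z : G, act (act a a) z = act a z := by
    intro a z
    have hz : act a (tl z a) = z := hli a z
    calc act (act a a) z = act (act a a) (act a (tl z a)) := by rw [hz]
      _ = act a (act a (tl z a)) := (hsd a a (tl z a)).symm
      _ = act a z := by rw [hz]
  -- the squaring map is injective
  have sqinj : Function.Injective (fun a : G => act a a) := by
    intro a b h
    simp only at h
    have h2 := hsq a b
    rw [h] at h2
    have h1 : act a b = act b b := h2.symm.trans (hsq b b)
    exact actinj a (h.trans h1.symm)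
  have sqbij : Function.Bijective (fun a : G => act a a) :=
    Finite.injective_iff_bijective.mp sqinj
  set e := Equiv.ofBijective (fun a : G => act a a) sqbij with he
  have heap : ∀ Z : G, act (e.symm Z) (e.symm Z) = Z := by
    intro Z
    exact e.apply_symm_apply Z
  -- key distributivity for tl
  have tldist : ∀ X Y T : G, tl (tl X Y) T = tl (tl X T) (tl Y T) := by
    intro X Y T
    apply actinj T
    rw [hli]
    apply actinj Y
    rw [hli]
    calc X = act T (tl X T) := (hli T X).symm
      _ = act T (act (tl Y T) (tl (tl X T) (tl Y T))) :=
        congrArg (act T) (hli (tl Y T) (tl X T)).symm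
      _ = act (act T (tl Y T)) (act T (tl (tl X T) (tl Y T))) := hsd T (tl Y T) _
      _ = act Y (act T (tl (tl X T) (tl Y T))) :=
        congrArg (fun u => act u (act T (tl (tl X T) (tl Y T)))) (hli T Y)
  -- R2
  have hR2 : ∀ X Y : G,
      (fun B A => A * B * (tl A B)⁻¹ * B⁻¹) X Y *
        (fun B A => B * A * B⁻¹ * (act B A)⁻¹) X
          (X⁻¹ * ((MonoidHom.id G) ((fun B A => A * B * (tl A B)⁻¹ * B⁻¹) X Y))⁻¹ * Y * X) = 1 := by
    intro X Y
    simp only [MonoidHom.id_apply]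
    have hz : X⁻¹ * (Y * X * (tl Y X)⁻¹ * X⁻¹)⁻¹ * Y * X = tl Y X := by group
    rw [hz, hli]
    group
  -- R3
  have hR3 : ∀ X Y T : G,
      (fun B A => A * B * (tl A B)⁻¹ * B⁻¹) Y X *
        (fun g e => g * e * g⁻¹) Y
          ((fun B A => A * B * (tl A B)⁻¹ * B⁻¹) T
            (Y⁻¹ * ((MonoidHom.id G) ((fun B A => A * B * (tl A B)⁻¹ * B⁻¹) Y X))⁻¹ * X * Y)) *
        (fun B A => A * B * (tl A B)⁻¹ * B⁻¹) T Y =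
      (fun g e => g * e * g⁻¹) X ((fun B A => A * B * (tl A B)⁻¹ * B⁻¹) T Y) *
        (fun B A => A * B * (tl A B)⁻¹ * B⁻¹) T X *
        (fun g e => g * e * g⁻¹) T
          ((fun B A => A * B * (tl A B)⁻¹ * B⁻¹)
            (T⁻¹ * ((MonoidHom.id G) ((fun B A => A * B * (tl A B)⁻¹ * B⁻¹) T Y))⁻¹ * Y * T)
            (T⁻¹ * ((MonoidHom.id G) ((fun B A => A * B * (tl A B)⁻¹ * B⁻¹) T X))⁻¹ * X * T)) := by
    intro X Y T
    simp only [MonoidHom.id_apply]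
    have hz1 : Y⁻¹ * (X * Y * (tl X Y)⁻¹ * Y⁻¹)⁻¹ * X * Y = tl X Y := by group
    have hz2 : T⁻¹ * (Y * T * (tl Y T)⁻¹ * T⁻¹)⁻¹ * Y * T = tl Y T := by group
    have hz3 : T⁻¹ * (X * T * (tl X T)⁻¹ * T⁻¹)⁻¹ * X * T = tl X T := by group
    rw [hz1, hz2, hz3, tldist X Y T]
    group
  have hframed : IsFramedReidemeisterPair (MonoidHom.id G) (fun g e => g * e * g⁻¹)
      (fun B A => B * A * B⁻¹ * (act B A)⁻¹)
      (fun B A => A * B * (tl A B)⁻¹ * B⁻¹) := by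
    refine ⟨hR2, hR3, fun Z => e.symm Z, ?_, ?_, ?_, ?_⟩
    · intro Z
      simp only [MonoidHom.id_apply]
      have h1 : tl Z (e.symm Z) = e.symm Z := by
        have h2 := hri (e.symm Z) (e.symm Z)
        rwa [heap Z] at h2
      rw [h1]
      group
    · intro Z A h
      simp only [MonoidHom.id_apply] at h
      have h1 : tl Z A = A := by
        have h3 : Z * A * (tl Z A)⁻¹ = Z := by
          calc Z * A * (tl Z A)⁻¹ = Z * A * (tl Z A)⁻¹ * A⁻¹ * A := by group
            _ = Z := h
        have h5 : Z * A * (tl Z A)⁻¹ = Z * A * A⁻¹ := by rw [h3]; group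
        exact inv_injective (mul_left_cancel h5)
      have h5 : act A A = Z := by
        nth_rewrite 2 [← h1]
        exact hli A Z
      apply sqinj
      simp only
      rw [h5, heap]
    · intro A
      have h1 : ((MonoidHom.id G) (A * A * A⁻¹ * (act A A)⁻¹))⁻¹ * A = act A A := by
        simp only [MonoidHom.id_apply]; group
      rw [h1]
      exact e.symm_apply_apply A
    · intro Z
      simp only [MonoidHom.id_apply]
      have h1 : (e.symm Z * e.symm Z * (e.symm Z)⁻¹ * (act (e.symm Z) (e.symm Z))⁻¹)⁻¹ * e.symm Z
          = act (e.symm Z) (e.symm Z) := by group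
      rw [h1, heap]
  refine ⟨hframed, fun hq => ⟨?_, hR2, hR3⟩⟩
  intro X
  simp only
  rw [hq X]
  group
end

section
/- Let R be a finite rack whose underlying set carries an arbitrary group structure G, let V be an abelian group (written additively), and let w: R × R → V be a rack 2-cocycle, i.e. w(x,y) + w(x ◁ y, z) = w(x,z) + w(x ◁ z, y ◁ z) for all x,y,z ∈ R. Consider the crossed module (∂: G × V → G, •) where ∂(g,v) = g and g • (h,v) = (g h g⁻¹, v). Define ψ(B,A) = (B A B⁻¹ (B ▷ A)⁻¹, w(B ▷ A, B)) and φ(B,A) = (A B (A ◁ B)⁻¹ B⁻¹, −w(A,B)). Then (ψ, φ) is a framed Reidemeister pair for this crossed module. Moreover, if R is a quandle and w is a quandle 2-cocycle (i.e. additionally w(x,x) = 0 for all x ∈ R), then (ψ, φ) is an unframed Reidemeister pair. -/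
/-- Let `R` be a finite rack whose underlying set carries an arbitrary group
structure `G`, let `V` be an abelian group and `w : R × R → V` a rack
2-cocycle.  Consider the crossed module `(∂ : G × V → G, •)` with
`∂(g,v) = g` and `g • (h,v) = (g h g⁻¹, v)`.  With
`ψ(B,A) = (B A B⁻¹ (B ▷ A)⁻¹, w(B ▷ A, B))` and
`φ(B,A) = (A B (A ◁ B)⁻¹ B⁻¹, −w(A,B))`, the pair `(ψ, φ)` is a framed
Reidemeister pair; moreover if `R` is a quandle and `w` a quandle 2-cocycle,
`(ψ, φ)` is an unframed Reidemeister pair. -/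
theorem rack_cocycle_reidemeister_pair {G V : Type*} [Group G] [Finite G]
    [AddCommGroup V]
    (act tl : G → G → G)
    (hsd : ∀ x y z, act x (act y z) = act (act x y) (act x z))
    (hli : ∀ x y, act x (tl y x) = y)
    (hri : ∀ x y, tl (act x y) x = y)
    (w : G → G → V)
    (hcoc : ∀ x y z, w x y + w (tl x y) z = w x z + w (tl x z) (tl y z)) :
    IsFramedReidemeisterPair (MonoidHom.fst G (Multiplicative V))
      (fun g e => (g * e.1 * g⁻¹, e.2))
      (fun B A => (B * A * B⁻¹ * (act B A)⁻¹,
        Multiplicative.ofAdd (w (act B A) B)))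
      (fun B A => (A * B * (tl A B)⁻¹ * B⁻¹,
        Multiplicative.ofAdd (-w A B))) ∧
    ((∀ x, act x x = x) → (∀ x, w x x = 0) →
      IsUnframedReidemeisterPair (MonoidHom.fst G (Multiplicative V))
        (fun g e => (g * e.1 * g⁻¹, e.2))
        (fun B A => (B * A * B⁻¹ * (act B A)⁻¹,
          Multiplicative.ofAdd (w (act B A) B)))
        (fun B A => (A * B * (tl A B)⁻¹ * B⁻¹,
          Multiplicative.ofAdd (-w A B)))) := by
  
  -- injectivity of `act x`
  have inj : ∀ x u v : G, act x u = act x v → u = v := by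
    intro x u v h
    have h2 := congrArg (fun t => tl t x) h
    simpa [hri] using h2
  -- act (act a a) a = act a a
  have hstar : ∀ a : G, act (act a a) a = act a a := by
    intro a
    have h := hsd a a (tl a a)
    rw [hli] at h
    exact h.symm
  -- tl (act a a) (act a a) = a
  have hdc : ∀ a : G, tl (act a a) (act a a) = a := by
    intro a
    calc tl (act a a) (act a a) = tl (act (act a a) a) (act a a) := by rw [hstar]
    _ = a := hri _ _
  -- act (tl z z) (tl z z) = z
  have hcd : ∀ z : G, act (tl z z) (tl z z) = z := by
    intro z
    apply inj z
    rw [hsd, hli]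
  -- self-distributivity of tl
  have htl : ∀ X Y T : G, tl (tl X Y) T = tl (tl X T) (tl Y T) := by
    intro X Y T
    have h := hsd T (tl Y T) (tl (tl X T) (tl Y T))
    simp only [hli] at h
    have e2 : act T (tl (tl X T) (tl Y T)) = tl X Y :=
      inj Y _ _ (h.symm.trans (hli Y X).symm)
    rw [← e2]
    exact hri T _
  have hframed : IsFramedReidemeisterPair (MonoidHom.fst G (Multiplicative V))
      (fun g e => (g * e.1 * g⁻¹, e.2))
      (fun B A => (B * A * B⁻¹ * (act B A)⁻¹,
        Multiplicative.ofAdd (w (act B A) B)))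
      (fun B A => (A * B * (tl A B)⁻¹ * B⁻¹,
        Multiplicative.ofAdd (-w A B))) := by
    unfold IsFramedReidemeisterPair
    refine ⟨?_, ?_, ⟨fun Z => tl Z Z, ?_, ?_, ?_, ?_⟩⟩
    · -- R2
      intro X Y
      show ((Y * X * (tl Y X)⁻¹ * X⁻¹, Multiplicative.ofAdd (-w Y X)) :
          G × Multiplicative V) *
        (X * (X⁻¹ * (Y * X * (tl Y X)⁻¹ * X⁻¹)⁻¹ * Y * X) * X⁻¹ *
            (act X (X⁻¹ * (Y * X * (tl Y X)⁻¹ * X⁻¹)⁻¹ * Y * X))⁻¹,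
          Multiplicative.ofAdd
            (w (act X (X⁻¹ * (Y * X * (tl Y X)⁻¹ * X⁻¹)⁻¹ * Y * X)) X)) = 1
      have hZ : X⁻¹ * (Y * X * (tl Y X)⁻¹ * X⁻¹)⁻¹ * Y * X = tl Y X := by group
      rw [hZ, hli]
      rw [Prod.mk_mul_mk, Prod.mk_eq_one]
      constructor
      · group
      · rw [← ofAdd_add, neg_add_cancel, ofAdd_zero]
    · -- R3
      intro X Y T
      show ((X * Y * (tl X Y)⁻¹ * Y⁻¹, Multiplicative.ofAdd (-w X Y)) :
          G × Multiplicative V) *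
        (Y * ((Y⁻¹ * (X * Y * (tl X Y)⁻¹ * Y⁻¹)⁻¹ * X * Y) * T *
            (tl (Y⁻¹ * (X * Y * (tl X Y)⁻¹ * Y⁻¹)⁻¹ * X * Y) T)⁻¹ * T⁻¹) * Y⁻¹,
          Multiplicative.ofAdd (-w (Y⁻¹ * (X * Y * (tl X Y)⁻¹ * Y⁻¹)⁻¹ * X * Y) T)) *
        (Y * T * (tl Y T)⁻¹ * T⁻¹, Multiplicative.ofAdd (-w Y T)) =
        (X * (Y * T * (tl Y T)⁻¹ * T⁻¹) * X⁻¹, Multiplicative.ofAdd (-w Y T)) *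
        (X * T * (tl X T)⁻¹ * T⁻¹, Multiplicative.ofAdd (-w X T)) *
        (T * ((T⁻¹ * (X * T * (tl X T)⁻¹ * T⁻¹)⁻¹ * X * T) *
            (T⁻¹ * (Y * T * (tl Y T)⁻¹ * T⁻¹)⁻¹ * Y * T) *
            (tl (T⁻¹ * (X * T * (tl X T)⁻¹ * T⁻¹)⁻¹ * X * T)
              (T⁻¹ * (Y * T * (tl Y T)⁻¹ * T⁻¹)⁻¹ * Y * T))⁻¹ *
            (T⁻¹ * (Y * T * (tl Y T)⁻¹ * T⁻¹)⁻¹ * Y * T)⁻¹) * T⁻¹,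
          Multiplicative.ofAdd
            (-w (T⁻¹ * (X * T * (tl X T)⁻¹ * T⁻¹)⁻¹ * X * T)
              (T⁻¹ * (Y * T * (tl Y T)⁻¹ * T⁻¹)⁻¹ * Y * T)))
      have hZ : Y⁻¹ * (X * Y * (tl X Y)⁻¹ * Y⁻¹)⁻¹ * X * Y = tl X Y := by group
      have hV : T⁻¹ * (Y * T * (tl Y T)⁻¹ * T⁻¹)⁻¹ * Y * T = tl Y T := by group
      have hW : T⁻¹ * (X * T * (tl X T)⁻¹ * T⁻¹)⁻¹ * X * T = tl X T := by group
      rw [hZ, hV, hW]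
      rw [Prod.mk_mul_mk, Prod.mk_mul_mk, Prod.mk_mul_mk, Prod.mk_mul_mk,
        Prod.mk.injEq]
      constructor
      · rw [htl X Y T]
        group
      · rw [← ofAdd_add, ← ofAdd_add, ← ofAdd_add, ← ofAdd_add]
        refine congrArg Multiplicative.ofAdd ?_
        have h := hcoc X Y T
        calc -w X Y + -w (tl X Y) T + -w Y T
            = -(w X Y + w (tl X Y) T) + -w Y T := by abel
          _ = -(w X T + w (tl X T) (tl Y T)) + -w Y T := by rw [h]
          _ = -w Y T + -w X T + -w (tl X T) (tl Y T) := by abel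
    · -- existence
      intro Z
      show Z * tl Z Z * (tl Z (tl Z Z))⁻¹ * (tl Z Z)⁻¹ * tl Z Z = Z
      have e : tl Z (tl Z Z) = tl Z Z := by
        calc tl Z (tl Z Z) = tl (act (tl Z Z) (tl Z Z)) (tl Z Z) := by rw [hcd]
        _ = tl Z Z := hri _ _
      rw [e]
      group
    · -- uniqueness
      intro Z A h
      have h' : Z * A * (tl Z A)⁻¹ * A⁻¹ * A = Z := h
      have h2 : tl Z A = A := by
        have hinv : (tl Z A)⁻¹ = A⁻¹ := by
          calc (tl Z A)⁻¹ = A⁻¹ * Z⁻¹ * (Z * A * (tl Z A)⁻¹ * A⁻¹ * A) := by group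
          _ = A⁻¹ * Z⁻¹ * Z := by rw [h']
          _ = A⁻¹ := by group
        exact inv_injective hinv
      have h4 : act A A = Z := by
        have := hli A Z
        rwa [h2] at this
      show A = tl Z Z
      rw [← h4]
      exact (hdc A).symm
    · -- f ∘ g = id
      intro A
      show tl ((A * A * A⁻¹ * (act A A)⁻¹)⁻¹ * A) ((A * A * A⁻¹ * (act A A)⁻¹)⁻¹ * A) = A
      have e : (A * A * A⁻¹ * (act A A)⁻¹)⁻¹ * A = act A A := by group
      rw [e]
      exact hdc A
    · -- g ∘ f = id
      intro Z
      show (tl Z Z * tl Z Z * (tl Z Z)⁻¹ * (act (tl Z Z) (tl Z Z))⁻¹)⁻¹ * tl Z Z = Z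
      rw [hcd Z]
      group
  refine ⟨hframed, fun hq hw0 => ⟨?_, hframed.1, hframed.2.1⟩⟩
  intro X
  show ((X * X * X⁻¹ * (act X X)⁻¹, Multiplicative.ofAdd (w (act X X) X)) :
      G × Multiplicative V) = 1
  rw [hq, hw0, ofAdd_zero, Prod.mk_eq_one]
  constructor
  · group
  · rfl
end

section
/- Let G be a group and x ∈ G. Define φˣ(L,M) = [M x⁻¹, L x⁻¹] and ψˣ(L,M) = [L,M]·[M L⁻¹, x], where [a,b] = a b a⁻¹ b⁻¹. Then (ψˣ, φˣ) is an unframed Reidemeister pair for the crossed module (id: G → G, conjugation action). Explicitly, for all L, M, N ∈ G: (R1) ψˣ(L,L) = 1; (R2) φˣ(L,M)·ψˣ(L, x⁻¹ M L⁻¹ x L) = 1; (R3) φˣ(L,M)·L φˣ(N,P) L⁻¹·φˣ(N,L) = M φˣ(N,L) M⁻¹·φˣ(N,M)·N φˣ(R,Q) N⁻¹, where P = x⁻¹ M L⁻¹ x L, R = x⁻¹ L N⁻¹ x N, and Q = x⁻¹ M N⁻¹ x N. -/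
open scoped commutatorElement

/-- Let `G` be a group and `x ∈ G`.  With `φˣ(L,M) = ⁅M x⁻¹, L x⁻¹⁆` and
`ψˣ(L,M) = ⁅L,M⁆·⁅M L⁻¹, x⁆`, the pair `(ψˣ, φˣ)` is an unframed
Reidemeister pair for the crossed module `(id : G → G, conjugation)`.
Explicitly: (R1) `ψˣ(L,L) = 1`; (R2) `φˣ(L,M)·ψˣ(L, x⁻¹ M L⁻¹ x L) = 1`;
(R3) `φˣ(L,M)·L φˣ(N,P) L⁻¹·φˣ(N,L) = M φˣ(N,L) M⁻¹·φˣ(N,M)·N φˣ(R,Q) N⁻¹`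
where `P = x⁻¹ M L⁻¹ x L`, `R = x⁻¹ L N⁻¹ x N`, `Q = x⁻¹ M N⁻¹ x N`. -/
theorem eisermann_reidemeister_pair {G : Type*} [Group G] (x : G) :
    IsUnframedReidemeisterPair (MonoidHom.id G) (fun g e => g * e * g⁻¹)
      (fun L M => ⁅L, M⁆ * ⁅M * L⁻¹, x⁆)
      (fun L M => ⁅M * x⁻¹, L * x⁻¹⁆) ∧
    (∀ L : G, ⁅L, L⁆ * ⁅L * L⁻¹, x⁆ = 1) ∧
    (∀ L M : G,
      ⁅M * x⁻¹, L * x⁻¹⁆ *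
        (⁅L, x⁻¹ * M * L⁻¹ * x * L⁆ * ⁅(x⁻¹ * M * L⁻¹ * x * L) * L⁻¹, x⁆) = 1) ∧
    (∀ L M N : G,
      ⁅M * x⁻¹, L * x⁻¹⁆ *
          (L * ⁅(x⁻¹ * M * L⁻¹ * x * L) * x⁻¹, N * x⁻¹⁆ * L⁻¹) *
          ⁅L * x⁻¹, N * x⁻¹⁆ =
        (M * ⁅L * x⁻¹, N * x⁻¹⁆ * M⁻¹) * ⁅M * x⁻¹, N * x⁻¹⁆ *
          (N * ⁅(x⁻¹ * M * N⁻¹ * x * N) * x⁻¹,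
              (x⁻¹ * L * N⁻¹ * x * N) * x⁻¹⁆ * N⁻¹)) := by
  refine ⟨⟨fun X => by simp [commutatorElement_def],
    fun X Y => by simp only [MonoidHom.id_apply, commutatorElement_def]; group,
    fun X Y T => by simp only [MonoidHom.id_apply, commutatorElement_def]; group⟩,
    fun L => by simp [commutatorElement_def],
    fun L M => by simp only [commutatorElement_def]; group,
    fun L M N => by simp only [commutatorElement_def]; group⟩
end

section
/- In any 2-crossed module (L →δ E →∂ G, ▷, {,}), for all x, y ∈ E the following two identities hold: (x ▷' {x⁻¹, y})·{x, ∂(x)⁻¹ ▷ y} = 1 and {x, y}·((∂(x) ▷ y) ▷' {x, y⁻¹}) = 1, where e ▷' l := l·{δ(l)⁻¹, e} for e ∈ E, l ∈ L. -/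
/-- A 2-crossed module `(L →δ E →∂ G, ▷, {,})`: groups `L`, `E`, `G`,
homomorphisms `dl = δ : L → E` and `pd = ∂ : E → G` with `∂ ∘ δ` trivial,
left actions `▷` of `G` by automorphisms on `L` (`actL`) and on `E` (`actE`)
making `δ` and `∂` equivariant, and a `G`-equivariant Peiffer lifting
`pl = {,} : E × E → L` satisfying the usual axioms. -/
structure TwoCrossedModule (L E G : Type*) [Group L] [Group E] [Group G] where
  /-- `δ : L → E` -/
  dl : L →* E
  /-- `∂ : E → G` -/
  pd : E →* G
  /-- the action of `G` on `L` -/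
  actL : G → L → L
  /-- the action of `G` on `E` -/
  actE : G → E → E
  /-- the Peiffer lifting `{,} : E × E → L` -/
  pl : E → E → L
  pd_dl : ∀ l, pd (dl l) = 1
  actL_one : ∀ l, actL 1 l = l
  actL_mul : ∀ g h l, actL (g * h) l = actL g (actL h l)
  actL_hom : ∀ g l k, actL g (l * k) = actL g l * actL g k
  actE_one : ∀ e, actE 1 e = e
  actE_mul : ∀ g h e, actE (g * h) e = actE g (actE h e)
  actE_hom : ∀ g e f, actE g (e * f) = actE g e * actE g f
  dl_equiv : ∀ g l, dl (actL g l) = actE g (dl l)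
  pd_equiv : ∀ g e, pd (actE g e) = g * pd e * g⁻¹
  pl_equiv : ∀ g e f, actL g (pl e f) = pl (actE g e) (actE g f)
  dl_pl : ∀ e f, dl (pl e f) = e * f * e⁻¹ * actE (pd e) f⁻¹
  pl_dl_dl : ∀ l k, pl (dl l) (dl k) = l * k * l⁻¹ * k⁻¹
  pl_dl_cancel : ∀ l e, pl (dl l) e * pl e (dl l) = l * actL (pd e) l⁻¹
  pl_mul_left : ∀ e f g, pl (e * f) g = pl e (f * g * f⁻¹) * actL (pd e) (pl f g)
  pl_mul_right : ∀ e f g,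
    pl e (f * g) = pl e f * (pl e g * pl ((dl (pl e g))⁻¹) (actE (pd e) f))

namespace TwoCrossedModule

variable {L E G : Type*} [Group L] [Group E] [Group G]

/-- The operation `e ▷' l := l·{δ(l)⁻¹, e}`, a left action of `E` on `L`
by automorphisms, making `(δ : L → E, ▷')` a crossed module. -/
def trp (T : TwoCrossedModule L E G) (e : E) (l : L) : L :=
  l * T.pl ((T.dl l)⁻¹) e

end TwoCrossedModule

namespace TwoCrossedModule

variable {L E G : Type*} [Group L] [Group E] [Group G] (T : TwoCrossedModule L E G)

lemma actE_one_right (g : G) : T.actE g 1 = 1 :=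
  mul_left_cancel (a := T.actE g 1) (by rw [← T.actE_hom, one_mul, mul_one])

lemma actE_inv' (g : G) (e : E) : T.actE g e⁻¹ = (T.actE g e)⁻¹ := by
  have h : T.actE g e * T.actE g e⁻¹ = 1 := by
    rw [← T.actE_hom, mul_inv_cancel, T.actE_one_right]
  exact eq_inv_of_mul_eq_one_right h

lemma pl_one_left (g : E) : T.pl 1 g = 1 := by
  have h := T.pl_mul_left 1 1 g
  rw [one_mul, one_mul, inv_one, mul_one, map_one, T.actL_one] at h
  exact (left_eq_mul.mp h)

lemma pl_one_right (e : E) : T.pl e 1 = 1 := by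
  have key : ∀ f : E,
      T.pl e 1 * T.pl ((T.dl (T.pl e 1))⁻¹) (T.actE (T.pd e) f) = 1 := by
    intro f
    have h := T.pl_mul_right e f 1
    rw [mul_one] at h
    exact (left_eq_mul.mp h)
  have h2 := key (T.actE ((T.pd e))⁻¹ (T.dl (T.pl e 1))⁻¹)
  rw [← T.actE_mul, mul_inv_cancel, T.actE_one, ← map_inv, T.pl_dl_dl] at h2
  simpa using h2

/-- The second identity: `{x, y}·((∂(x) ▷ y) ▷' {x, y⁻¹}) = 1`. -/
lemma second_formula (x y : E) :
    T.pl x y * T.trp (T.actE (T.pd x) y) (T.pl x y⁻¹) = 1 := by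
  have h := T.pl_mul_right x y y⁻¹
  rw [mul_inv_cancel, T.pl_one_right] at h
  rw [trp]
  exact h.symm

lemma trp_mul_dl (e : E) (m : L) : T.trp (e * T.dl m) m = T.trp e m := by
  unfold trp
  have h := T.pl_mul_right ((T.dl m)⁻¹) e (T.dl m)
  have h1 : T.pl (T.dl m)⁻¹ (T.dl m) = 1 := by
    rw [← map_inv, T.pl_dl_dl]; group
  rw [h, h1, map_one, inv_one, T.pl_one_left]
  simp

/-- The first identity: `(x ▷' {x⁻¹, y})·{x, ∂(x)⁻¹ ▷ y} = 1`. -/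
lemma first_formula (x y : E) :
    T.trp x (T.pl x⁻¹ y) * T.pl x (T.actE ((T.pd x)⁻¹) y) = 1 := by
  set q := (T.pd x)⁻¹ with hq
  set z := T.actE q y with hz
  set l := T.pl x⁻¹ y with hl
  set C := x⁻¹ * y * x with hC
  set m := T.pl x C⁻¹ with hm
  set A := T.actL (T.pd x) l with hA
  have hy : T.actE (T.pd x) z = y := by
    rw [hz, ← T.actE_mul, hq, mul_inv_cancel, T.actE_one]
  -- (b) : (dl l)⁻¹ = z * C⁻¹
  have hdl : (T.dl l)⁻¹ = z * C⁻¹ := by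
    rw [hl, T.dl_pl, map_inv T.pd, ← hq, T.actE_inv', ← hz, hC]
    group
  -- (d) : pl x C * A = 1
  have hd : T.pl x C * A = 1 := by
    have h := T.pl_mul_left x x⁻¹ y
    rw [mul_inv_cancel, T.pl_one_left, inv_inv] at h
    rw [hA, hl, hC]
    exact h.symm
  -- (f) : actE (pd x) C = y * dl m
  have hf : T.actE (T.pd x) C = y * T.dl m := by
    rw [hm, T.dl_pl, inv_inv, hC]
    group
  -- (e)+(g) : pl x C * trp y m = 1
  have he : T.pl x C * T.trp y m = 1 := by
    have h := T.second_formula x C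
    rw [hf, T.trp_mul_dl] at h
    exact h
  -- trp y m = A
  have hW : T.trp y m = A := mul_left_cancel (he.trans hd.symm)
  -- (c) : pl x ((dl l)⁻¹) = pl x z * trp y m
  have hc : T.pl x ((T.dl l)⁻¹) = T.pl x z * T.trp y m := by
    rw [hdl, T.pl_mul_right x z C⁻¹, hy, trp, ← hm]
  -- (a) : Peiffer-lifting cancellation
  have ha := T.pl_dl_cancel l⁻¹ x
  rw [inv_inv, map_inv] at ha
  have ha' : T.pl ((T.dl l)⁻¹) x = l⁻¹ * A * (T.pl x ((T.dl l)⁻¹))⁻¹ := by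
    rw [← ha]; group
  rw [trp, ha', hc, hW]
  group

end TwoCrossedModule


/-- In any 2-crossed module, for all `x, y ∈ E`:
`(x ▷' {x⁻¹, y})·{x, ∂(x)⁻¹ ▷ y} = 1` and
`{x, y}·((∂(x) ▷ y) ▷' {x, y⁻¹}) = 1`. -/
theorem two_crossed_module_inv_formulas {L E G : Type*}
    [Group L] [Group E] [Group G]
    (T : TwoCrossedModule L E G) (x y : E) :
    T.trp x (T.pl x⁻¹ y) * T.pl x (T.actE ((T.pd x)⁻¹) y) = 1 ∧
    T.pl x y * T.trp (T.actE (T.pd x) y) (T.pl x y⁻¹) = 1 := by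
  exact ⟨T.first_formula x y, T.second_formula x y⟩
end

section
/- In any braided crossed module (δ: E → G, {,}), for all M, L, N, x ∈ G: {M x⁻¹, L x⁻¹}·(L ▷' {x⁻¹ M L⁻¹ x L x⁻¹, N x⁻¹})·{L x⁻¹, N x⁻¹} = (M ▷' {L x⁻¹, N x⁻¹})·{M x⁻¹, N x⁻¹}·(N ▷' {x⁻¹ M N⁻¹ x N x⁻¹, x⁻¹ L N⁻¹ x N x⁻¹}), where g ▷' e := e·{δ(e)⁻¹, g} for g ∈ G, e ∈ E. -/
/-- A braided crossed module `(δ : E → G, {,})` (a 2-crossed module with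
trivial bottom group): groups `E` and `G`, a homomorphism `dl = δ : E → G`,
and a Peiffer lifting `pl = {,} : G × G → E` satisfying
`δ({g,h}) = g h g⁻¹ h⁻¹`; `{δ(e), δ(f)} = e f e⁻¹ f⁻¹`;
`{δ(e), g}·{g, δ(e)} = 1`; `{g h, k} = {g, h k h⁻¹}·{h, k}`;
`{g, h k} = {g, h}·(h ▷' {g, k})`, where `g ▷' e := e·{δ(e)⁻¹, g}`. -/
structure BraidedCrossedModule (E G : Type*) [Group E] [Group G] where
  /-- `δ : E → G` -/
  dl : E →* G
  /-- the Peiffer lifting `{,} : G × G → E` -/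
  pl : G → G → E
  dl_pl : ∀ g h, dl (pl g h) = g * h * g⁻¹ * h⁻¹
  pl_dl : ∀ e f, pl (dl e) (dl f) = e * f * e⁻¹ * f⁻¹
  pl_dl_cancel : ∀ e g, pl (dl e) g * pl g (dl e) = 1
  pl_mul_left : ∀ g h k, pl (g * h) k = pl g (h * k * h⁻¹) * pl h k
  pl_mul_right : ∀ g h k,
    pl g (h * k) = pl g h * (pl g k * pl ((dl (pl g k))⁻¹) h)

namespace BraidedCrossedModule

variable {E G : Type*} [Group E] [Group G]

/-- The operation `g ▷' e := e·{δ(e)⁻¹, g}`, a left action of `G` on `E`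
by automorphisms, making `(δ : E → G, ▷')` a crossed module. -/
def trp (T : BraidedCrossedModule E G) (g : G) (e : E) : E :=
  e * T.pl ((T.dl e)⁻¹) g

end BraidedCrossedModule

namespace BraidedCrossedModule

variable {E G : Type*} [Group E] [Group G]

variable (T : BraidedCrossedModule E G)

lemma pl_one_left (g : G) : T.pl 1 g = 1 := by
  have h := T.pl_mul_left 1 1 g
  simp only [one_mul, mul_one, inv_one] at h
  exact (left_eq_mul.mp h)

lemma pl_one_right (g : G) : T.pl g 1 = 1 := by
  have h := T.pl_mul_right g 1 1
  have h1 : T.dl (T.pl g 1) = 1 := by rw [T.dl_pl]; group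
  rw [h1, inv_one, T.pl_one_left, mul_one, mul_one] at h
  exact (left_eq_mul.mp h)

lemma pl_mul_right' (g h k : G) :
    T.pl g (h * k) = T.pl g h * T.trp h (T.pl g k) := by
  rw [T.pl_mul_right]; rfl

lemma trp_one (e : E) : T.trp 1 e = e := by
  unfold trp; rw [T.pl_one_right, mul_one]

lemma trp_one' (g : G) : T.trp g 1 = 1 := by
  unfold trp; rw [map_one, inv_one, T.pl_one_left, mul_one]

lemma dl_trp (g : G) (e : E) : T.dl (T.trp g e) = g * T.dl e * g⁻¹ := by
  unfold trp; rw [map_mul, T.dl_pl]; group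

lemma peiffer (e f : E) : T.trp (T.dl e) f = e * f * e⁻¹ := by
  unfold trp
  rw [← map_inv, T.pl_dl]
  group

lemma trp_mul (g : G) (e f : E) : T.trp g (e * f) = T.trp g e * T.trp g f := by
  have hdc : (T.dl e)⁻¹ * g * ((T.dl e)⁻¹)⁻¹ = T.dl (T.pl (T.dl e)⁻¹ g) * g := by
    rw [T.dl_pl]; group
  show e * f * T.pl (T.dl (e * f))⁻¹ g
      = (e * T.pl (T.dl e)⁻¹ g) * (f * T.pl (T.dl f)⁻¹ g)
  rw [map_mul, mul_inv_rev, T.pl_mul_left, hdc, T.pl_mul_right', T.peiffer]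
  have h2 : T.pl (T.dl f)⁻¹ (T.dl (T.pl (T.dl e)⁻¹ g))
      = f⁻¹ * T.pl (T.dl e)⁻¹ g * f * (T.pl (T.dl e)⁻¹ g)⁻¹ := by
    rw [← map_inv, T.pl_dl, inv_inv]
  rw [h2]; group

lemma trp_inv (g : G) (e : E) : T.trp g e⁻¹ = (T.trp g e)⁻¹ := by
  exact eq_inv_of_mul_eq_one_right (by rw [← T.trp_mul, mul_inv_cancel, T.trp_one'])

lemma trp_trp (g h : G) (e : E) : T.trp g (T.trp h e) = T.trp (g * h) e := by
  show T.trp g (e * T.pl (T.dl e)⁻¹ h) = e * T.pl (T.dl e)⁻¹ (g * h)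
  rw [T.trp_mul, T.pl_mul_right']
  show _ = e * (T.pl (T.dl e)⁻¹ g * T.trp g (T.pl (T.dl e)⁻¹ h))
  rw [← mul_assoc]
  rfl

lemma pl_dl_inv (e : E) (g : G) : T.pl (T.dl e)⁻¹ g = (T.pl g (T.dl e)⁻¹)⁻¹ := by
  have h := T.pl_dl_cancel e⁻¹ g
  rw [map_inv] at h
  exact eq_inv_of_mul_eq_one_left h

lemma pl_dl_right (e : E) (g : G) : T.pl (T.dl e) g = (T.pl g (T.dl e))⁻¹ := by
  exact eq_inv_of_mul_eq_one_left (T.pl_dl_cancel e g)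

lemma trp2 (g : G) (e : E) : T.trp g e = T.pl g (T.dl e) * e := by
  have h0 : T.pl g (T.dl e * (T.dl e)⁻¹) = 1 := by
    rw [mul_inv_cancel, T.pl_one_right]
  rw [T.pl_mul_right'] at h0
  have h1 : T.trp (T.dl e) (T.pl g (T.dl e)⁻¹)
      = e * T.pl g (T.dl e)⁻¹ * e⁻¹ := T.peiffer e _
  rw [h1] at h0
  -- h0 : pl g (dl e) * (e * pl g (dl e)⁻¹ * e⁻¹) = 1
  have h2 : T.pl g (T.dl e)⁻¹ = e⁻¹ * (T.pl g (T.dl e))⁻¹ * e := by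
    have := mul_eq_one_iff_inv_eq.mp h0
    rw [this]; group
  show e * T.pl (T.dl e)⁻¹ g = _
  rw [T.pl_dl_inv, h2]
  group

lemma pl_inv_snd (k g : G) : T.pl k g⁻¹ = T.trp g⁻¹ ((T.pl k g)⁻¹) := by
  have h0 : T.pl k (g * g⁻¹) = 1 := by rw [mul_inv_cancel, T.pl_one_right]
  rw [T.pl_mul_right'] at h0
  have h1 : T.trp g (T.pl k g⁻¹) = (T.pl k g)⁻¹ :=
    (inv_eq_of_mul_eq_one_right h0).symm
  calc T.pl k g⁻¹ = T.trp (g⁻¹ * g) (T.pl k g⁻¹) := by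
        rw [inv_mul_cancel, T.trp_one]
    _ = T.trp g⁻¹ (T.trp g (T.pl k g⁻¹)) := (T.trp_trp _ _ _).symm
    _ = T.trp g⁻¹ ((T.pl k g)⁻¹) := by rw [h1]

lemma pl_conj (k g h : G) : T.pl k (g * h * g⁻¹)
    = T.pl k g * T.trp g (T.pl k h) * T.trp (g * h * g⁻¹) ((T.pl k g)⁻¹) := by
  have h0 : T.pl k (g * h * g⁻¹) = T.pl k (g * (h * g⁻¹)) := by rw [mul_assoc]
  rw [h0, T.pl_mul_right', T.pl_mul_right', T.pl_inv_snd, T.trp_mul, T.trp_trp,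
    T.trp_trp, ← mul_assoc]

lemma pl_conj' (k g h : G) : T.pl k (g * h * g⁻¹) = T.pl (k * g) h * (T.pl g h)⁻¹ := by
  rw [T.pl_mul_left]; group

lemma trp_pl (k g h : G) :
    T.trp k (T.pl g h) = T.pl (k * g) h * (T.pl k h)⁻¹ := by
  have hq : T.dl (T.pl g h) = g * h * g⁻¹ * h⁻¹ := T.dl_pl g h
  have hY : T.pl k (T.dl (T.pl g h))⁻¹
      = T.pl k h * T.trp h (T.pl k g) * T.trp (h * g * h⁻¹) ((T.pl k h)⁻¹)
        * ((T.pl g h)⁻¹ * (T.pl k g)⁻¹ * T.pl g h) := by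
    have h5 : (T.dl (T.pl g h))⁻¹ = (h * g * h⁻¹) * g⁻¹ := by rw [hq]; group
    rw [h5, T.pl_mul_right', T.pl_inv_snd, T.trp_trp, T.pl_conj]
    have h6 : h * g * h⁻¹ * g⁻¹ = T.dl (T.pl g h)⁻¹ := by rw [map_inv, hq]; group
    rw [h6, T.peiffer]
    group
  have hY' : (T.pl k (T.dl (T.pl g h))⁻¹)⁻¹
      = (T.pl g h)⁻¹ * T.pl k g * T.pl g h * T.trp (h * g * h⁻¹) (T.pl k h)
        * T.trp h ((T.pl k g)⁻¹) * (T.pl k h)⁻¹ := by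
    rw [show T.trp (h * g * h⁻¹) (T.pl k h)
          = (T.trp (h * g * h⁻¹) ((T.pl k h)⁻¹))⁻¹ from by rw [← T.trp_inv, inv_inv],
       show T.trp h ((T.pl k g)⁻¹) = (T.trp h (T.pl k g))⁻¹ from T.trp_inv _ _,
       hY]
    group
  have h7 : T.pl (k * g) h
      = T.pl k g * T.trp g (T.pl k h) * T.trp (g * h * g⁻¹) ((T.pl k g)⁻¹)
        * T.pl g h := by
    rw [T.pl_mul_left, T.pl_conj]
  have m1 : T.pl g h * T.trp (h * g * h⁻¹) (T.pl k h)
      = T.trp g (T.pl k h) * T.pl g h := by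
    have hp := T.peiffer (T.pl g h) (T.trp (h * g * h⁻¹) (T.pl k h))
    rw [T.trp_trp, hq, show g * h * g⁻¹ * h⁻¹ * (h * g * h⁻¹) = g from by group] at hp
    rw [hp]; group
  have m2 : T.pl g h * T.trp h ((T.pl k g)⁻¹)
      = T.trp (g * h * g⁻¹) ((T.pl k g)⁻¹) * T.pl g h := by
    have hp := T.peiffer (T.pl g h) (T.trp h ((T.pl k g)⁻¹))
    rw [T.trp_trp, hq, show g * h * g⁻¹ * h⁻¹ * h = g * h * g⁻¹ from by group] at hp
    rw [hp]; group
  show T.pl g h * T.pl (T.dl (T.pl g h))⁻¹ k = _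
  rw [T.pl_dl_inv, hY', h7]
  calc T.pl g h * ((T.pl g h)⁻¹ * T.pl k g * T.pl g h * T.trp (h * g * h⁻¹) (T.pl k h)
        * T.trp h ((T.pl k g)⁻¹) * (T.pl k h)⁻¹)
      = T.pl k g * (T.pl g h * T.trp (h * g * h⁻¹) (T.pl k h))
        * T.trp h ((T.pl k g)⁻¹) * (T.pl k h)⁻¹ := by group
    _ = T.pl k g * (T.trp g (T.pl k h) * T.pl g h)
        * T.trp h ((T.pl k g)⁻¹) * (T.pl k h)⁻¹ := by rw [m1]
    _ = T.pl k g * T.trp g (T.pl k h) * (T.pl g h * T.trp h ((T.pl k g)⁻¹))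
        * (T.pl k h)⁻¹ := by group
    _ = T.pl k g * T.trp g (T.pl k h)
        * (T.trp (g * h * g⁻¹) ((T.pl k g)⁻¹) * T.pl g h) * (T.pl k h)⁻¹ := by rw [m2]
    _ = T.pl k g * T.trp g (T.pl k h) * T.trp (g * h * g⁻¹) ((T.pl k g)⁻¹)
        * T.pl g h * (T.pl k h)⁻¹ := by group

lemma trp_pl_conj (k g h : G) :
    T.trp k (T.pl g h) = T.pl (k * g * k⁻¹) (k * h * k⁻¹) := by
  rw [T.trp_pl, show k * g = (k * g * k⁻¹) * k from by group, T.pl_mul_left]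
  group

lemma g5E (m l n u : G) (e : E) :
    T.pl m l * T.trp l (T.pl (m * l⁻¹ * u) (n * T.dl e)) * T.pl l n
      = T.trp m (T.pl u (n * T.dl e)) * T.pl m n
        * T.trp n (T.pl (m * T.dl e) (l * T.dl e)) := by
  have A1 : T.pl m l * T.pl (l * (m * l⁻¹ * u)) (n * T.dl e)
      = T.pl (m * u) (n * T.dl e) * T.trp (n * T.dl e) (T.pl m l) := by
    calc T.pl m l * T.pl (l * (m * l⁻¹ * u)) (n * T.dl e)
        = T.trp (T.dl (T.pl m l)) (T.pl (l * (m * l⁻¹ * u)) (n * T.dl e))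
          * T.pl m l := by rw [T.peiffer]; group
      _ = T.pl (T.dl (T.pl m l) * (l * (m * l⁻¹ * u))) (n * T.dl e)
          * (((T.pl (n * T.dl e) (T.dl (T.pl m l)))⁻¹)⁻¹ * T.pl m l) := by
            rw [T.trp_pl, T.pl_dl_right]; group
      _ = T.pl (m * u) (n * T.dl e) * T.trp (n * T.dl e) (T.pl m l) := by
            rw [inv_inv, ← T.trp2, T.dl_pl,
              show m * l * m⁻¹ * l⁻¹ * (l * (m * l⁻¹ * u)) = m * u from by group]
  have A2 : (T.pl l (n * T.dl e))⁻¹ * T.pl l n = T.trp n ((T.pl l (T.dl e))⁻¹) := by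
    rw [T.pl_mul_right' l n (T.dl e), T.trp_inv]; group
  have A4 : T.pl (m * T.dl e) (l * T.dl e)
      = T.pl m (T.dl e) * T.trp (T.dl e) (T.pl m l) * (T.pl l (T.dl e))⁻¹ := by
    rw [T.pl_mul_left,
      show T.dl e * (l * T.dl e) * (T.dl e)⁻¹ = T.dl e * l from by group,
      T.pl_mul_right',
      show T.pl (T.dl e) (l * T.dl e) = (T.pl l (T.dl e))⁻¹ from by
        rw [T.pl_mul_right',
          show T.pl (T.dl e) (T.dl e) = 1 from by rw [T.pl_dl]; group,
          T.trp_one', mul_one, T.pl_dl_right]]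
  rw [T.trp_pl l (m * l⁻¹ * u) (n * T.dl e), T.trp_pl m u (n * T.dl e), A4,
    T.trp_mul, T.trp_mul, T.trp_trp]
  calc T.pl m l * (T.pl (l * (m * l⁻¹ * u)) (n * T.dl e)
          * (T.pl l (n * T.dl e))⁻¹) * T.pl l n
      = (T.pl m l * T.pl (l * (m * l⁻¹ * u)) (n * T.dl e))
          * ((T.pl l (n * T.dl e))⁻¹ * T.pl l n) := by group
    _ = (T.pl (m * u) (n * T.dl e) * T.trp (n * T.dl e) (T.pl m l))
          * T.trp n ((T.pl l (T.dl e))⁻¹) := by rw [A1, A2]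
    _ = T.pl (m * u) (n * T.dl e) * (T.pl m (n * T.dl e))⁻¹
          * (T.pl m (n * T.dl e)
            * (T.trp (n * T.dl e) (T.pl m l) * T.trp n ((T.pl l (T.dl e))⁻¹))) := by
        group
    _ = T.pl (m * u) (n * T.dl e) * (T.pl m (n * T.dl e))⁻¹
          * ((T.pl m n * T.trp n (T.pl m (T.dl e)))
            * (T.trp (n * T.dl e) (T.pl m l) * T.trp n ((T.pl l (T.dl e))⁻¹))) := by
        nth_rewrite 2 [T.pl_mul_right' m n (T.dl e)]
        rfl
    _ = T.pl (m * u) (n * T.dl e) * (T.pl m (n * T.dl e))⁻¹ * T.pl m n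
          * (T.trp n (T.pl m (T.dl e)) * T.trp (n * T.dl e) (T.pl m l)
            * T.trp n ((T.pl l (T.dl e))⁻¹)) := by group

end BraidedCrossedModule

/-- In any braided crossed module, for all `M, L, N, x ∈ G`:
`{M x⁻¹, L x⁻¹}·(L ▷' {x⁻¹ M L⁻¹ x L x⁻¹, N x⁻¹})·{L x⁻¹, N x⁻¹}
  = (M ▷' {L x⁻¹, N x⁻¹})·{M x⁻¹, N x⁻¹}
      ·(N ▷' {x⁻¹ M N⁻¹ x N x⁻¹, x⁻¹ L N⁻¹ x N x⁻¹})`. -/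
theorem braided_crossed_module_r3 {E G : Type*} [Group E] [Group G]
    (T : BraidedCrossedModule E G) (M L N x : G) :
    T.pl (M * x⁻¹) (L * x⁻¹) *
        T.trp L (T.pl (x⁻¹ * M * L⁻¹ * x * L * x⁻¹) (N * x⁻¹)) *
        T.pl (L * x⁻¹) (N * x⁻¹) =
      T.trp M (T.pl (L * x⁻¹) (N * x⁻¹)) * T.pl (M * x⁻¹) (N * x⁻¹) *
        T.trp N (T.pl (x⁻¹ * M * N⁻¹ * x * N * x⁻¹)
          (x⁻¹ * L * N⁻¹ * x * N * x⁻¹)) := by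
  have h1 : T.pl (x⁻¹ * M * L⁻¹ * x * L * x⁻¹) (N * x⁻¹)
      = T.trp x⁻¹ (T.pl ((M * x⁻¹) * (L * x⁻¹)⁻¹ * (x * (L * x⁻¹) * x⁻¹))
          ((N * x⁻¹) * T.dl (T.pl (N * x⁻¹)⁻¹ x))) := by
    rw [T.trp_pl_conj, T.dl_pl]
    congr 1 <;> group
  have h2 : T.pl (L * x⁻¹) (N * x⁻¹)
      = T.trp x⁻¹ (T.pl (x * (L * x⁻¹) * x⁻¹)
          ((N * x⁻¹) * T.dl (T.pl (N * x⁻¹)⁻¹ x))) := by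
    rw [T.trp_pl_conj, T.dl_pl]
    congr 1 <;> group
  have h3 : T.pl (x⁻¹ * M * N⁻¹ * x * N * x⁻¹) (x⁻¹ * L * N⁻¹ * x * N * x⁻¹)
      = T.trp x⁻¹ (T.pl ((M * x⁻¹) * T.dl (T.pl (N * x⁻¹)⁻¹ x))
          ((L * x⁻¹) * T.dl (T.pl (N * x⁻¹)⁻¹ x))) := by
    rw [T.trp_pl_conj, T.dl_pl]
    congr 1 <;> group
  rw [h1]
  nth_rewrite 2 [h2]
  rw [h3, T.trp_trp, T.trp_trp, T.trp_trp]
  exact T.g5E (M * x⁻¹) (L * x⁻¹) (N * x⁻¹) (x * (L * x⁻¹) * x⁻¹)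
    (T.pl (N * x⁻¹)⁻¹ x)
end

section
/- Let (δ: E → G, {,}) be a braided crossed module with δ surjective, and let x ∈ G. Define φˣ, ψˣ: G × G → E by φˣ(L,M) = {M x⁻¹, L x⁻¹} and ψˣ(L,M) = {L,M}·{M L⁻¹, x}. Then (ψˣ, φˣ) is an unframed Reidemeister pair for the crossed module (δ: E → G, ▷'), where g ▷' e := e·{δ(e)⁻¹, g}. In particular ψˣ(M,M) = 1 for all M ∈ G. -/
/-- Let `(δ : E → G, {,})` be a braided crossed module with `δ` surjective,
and `x ∈ G`.  With `φˣ(L,M) = {M x⁻¹, L x⁻¹}` and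
`ψˣ(L,M) = {L,M}·{M L⁻¹, x}`, the pair `(ψˣ, φˣ)` is an unframed
Reidemeister pair for the crossed module `(δ : E → G, ▷')`.
In particular `ψˣ(M,M) = 1` for all `M ∈ G`. -/
theorem braided_unframed_eisermann_lifting {E G : Type*} [Group E] [Group G]
    (T : BraidedCrossedModule E G) (hsurj : Function.Surjective T.dl)
    (x : G) :
    IsUnframedReidemeisterPair T.dl (fun g e => T.trp g e)
      (fun L M => T.pl L M * T.pl (M * L⁻¹) x)
      (fun L M => T.pl (M * x⁻¹) (L * x⁻¹)) ∧
    (∀ M : G, T.pl M M * T.pl (M * M⁻¹) x = 1) := by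
  constructor
  · refine ⟨?_, ?_, ?_⟩
    · intro X
      obtain ⟨a, rfl⟩ := hsurj X
      obtain ⟨c, rfl⟩ := hsurj x
      simp only [← map_inv, ← map_mul, T.pl_dl]
      group
    · intro X Y
      obtain ⟨a, rfl⟩ := hsurj X
      obtain ⟨b, rfl⟩ := hsurj Y
      obtain ⟨c, rfl⟩ := hsurj x
      simp only [BraidedCrossedModule.trp, ← map_inv, ← map_mul, T.pl_dl]
      group
    · intro X Y W
      obtain ⟨a, rfl⟩ := hsurj X
      obtain ⟨b, rfl⟩ := hsurj Y
      obtain ⟨t, rfl⟩ := hsurj W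
      obtain ⟨c, rfl⟩ := hsurj x
      simp only [BraidedCrossedModule.trp, ← map_inv, ← map_mul, T.pl_dl]
      group
  · intro M
    obtain ⟨a, rfl⟩ := hsurj M
    obtain ⟨c, rfl⟩ := hsurj x
    simp only [← map_inv, ← map_mul, T.pl_dl]
    group
end

section
/- Let ∂: E → G be a surjective group homomorphism whose kernel is contained in the center of E, and let s: G → E be a set-theoretic section of ∂. Define {g,h} := [s(g), s(h)] for g,h ∈ G (this does not depend on the chosen section). Then (∂: E → G, {,}) is a braided crossed module: for all g,h,k ∈ G and a,b ∈ E, ∂({g,h}) = [g,h]; {∂(a), ∂(b)} = [a,b]; {∂(a), g}·{g, ∂(a)} = 1; {g h, k} = {g, h k h⁻¹}·{h, k}; {g, h k} = {g, h}·s(h)·{g, k}·s(h)⁻¹; and the derived action satisfies g ▷' k := k·{∂(k)⁻¹, g} = s(g) k s(g)⁻¹ for all g ∈ G, k ∈ E. -/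
open scoped commutatorElement

/-- Let `∂ : E → G` be a surjective group homomorphism whose kernel is
contained in the center of `E`, and `s : G → E` a set-theoretic section of
`∂`.  With `{g,h} := ⁅s(g), s(h)⁆` (independent of the chosen section),
`(∂ : E → G, {,})` is a braided crossed module: for all `g,h,k ∈ G` and
`a,b ∈ E`, `∂({g,h}) = ⁅g,h⁆`; `{∂(a), ∂(b)} = ⁅a,b⁆`;
`{∂(a), g}·{g, ∂(a)} = 1`; `{g h, k} = {g, h k h⁻¹}·{h, k}`;
`{g, h k} = {g, h}·s(h)·{g, k}·s(h)⁻¹`; and the derived action satisfies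
`g ▷' k := k·{∂(k)⁻¹, g} = s(g) k s(g)⁻¹`. -/
theorem central_extension_braided_crossed_module {E G : Type*}
    [Group E] [Group G] (pd : E →* G) (hsurj : Function.Surjective pd)
    (hker : ∀ e : E, pd e = 1 → ∀ f : E, e * f = f * e)
    (s : G → E) (hs : ∀ g, pd (s g) = g) :
    (∀ (s' : G → E), (∀ g, pd (s' g) = g) →
      ∀ g h : G, ⁅s g, s h⁆ = ⁅s' g, s' h⁆) ∧
    (∀ g h : G, pd ⁅s g, s h⁆ = ⁅g, h⁆) ∧
    (∀ a b : E, ⁅s (pd a), s (pd b)⁆ = ⁅a, b⁆) ∧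
    (∀ (a : E) (g : G), ⁅s (pd a), s g⁆ * ⁅s g, s (pd a)⁆ = 1) ∧
    (∀ g h k : G, ⁅s (g * h), s k⁆ = ⁅s g, s (h * k * h⁻¹)⁆ * ⁅s h, s k⁆) ∧
    (∀ g h k : G,
      ⁅s g, s (h * k)⁆ = ⁅s g, s h⁆ * (s h * ⁅s g, s k⁆ * (s h)⁻¹)) ∧
    (∀ (g : G) (k : E), k * ⁅s (pd k)⁻¹, s g⁆ = s g * k * (s g)⁻¹) := by
  -- commutators depend only on the image under pd (left argument)
  have key : ∀ x y e : E, pd x = pd y → ⁅x, e⁆ = ⁅y, e⁆ := by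
    intro x y e h
    have hz := hker (y⁻¹ * x) (by simp [h]) e
    simp only [commutatorElement_def]
    calc x * e * x⁻¹ * e⁻¹ = y * ((y⁻¹ * x) * e) * x⁻¹ * e⁻¹ := by group
      _ = y * (e * (y⁻¹ * x)) * x⁻¹ * e⁻¹ := by rw [hz]
      _ = y * e * y⁻¹ * e⁻¹ := by group
  -- right argument version
  have key2 : ∀ e x y : E, pd x = pd y → ⁅e, x⁆ = ⁅e, y⁆ := by
    intro e x y h
    have := key x y e h
    calc ⁅e, x⁆ = ⁅x, e⁆⁻¹ := by group
      _ = ⁅y, e⁆⁻¹ := by rw [this]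
      _ = ⁅e, y⁆ := by group
  refine ⟨?_, ?_, ?_, ?_, ?_, ?_, ?_⟩
  · intro s' hs' g h
    rw [key (s g) (s' g) _ (by rw [hs, hs']),
        key2 _ (s h) (s' h) (by rw [hs, hs'])]
  · intro g h
    simp only [commutatorElement_def, map_mul, map_inv, hs]
  · intro a b
    rw [key (s (pd a)) a _ (hs _), key2 _ (s (pd b)) b (hs _)]
  · intro a g
    rw [key (s (pd a)) a _ (hs _), key2 _ (s (pd a)) a (hs _)]
    group
  · intro g h k
    rw [key (s (g * h)) (s g * s h) _ (by simp [hs]),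
        key2 _ (s (h * k * h⁻¹)) (s h * s k * (s h)⁻¹) (by simp [hs])]
    group
  · intro g h k
    rw [key2 _ (s (h * k)) (s h * s k) (by simp [hs])]
    group
  · intro g k
    rw [key (s (pd k)⁻¹) k⁻¹ _ (by simp [hs])]
    group
end

section
/- Let ∂: E → G be a surjective group homomorphism whose kernel is contained in the center of E, let s: G → E be a set-theoretic section of ∂, and let x ∈ G. Define φˣ, ψˣ: G × G → E by φˣ(g,h) = [s(h x⁻¹), s(g x⁻¹)] and ψˣ(g,h) = [s(g), s(h)]·[s(h g⁻¹), s(x)], where [a,b] = a b a⁻¹ b⁻¹. Then (ψˣ, φˣ) is an unframed Reidemeister pair for the crossed module (∂: E → G, ▷), where g ▷ e := s(g) e s(g)⁻¹. -/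
open scoped commutatorElement

private lemma conj_lift {E G : Type*} [Group E] [Group G] (pd : E →* G)
    (hker : ∀ e : E, pd e = 1 → ∀ f : E, e * f = f * e)
    {e e' : E} (h : pd e = pd e') (f : E) : e * f * e⁻¹ = e' * f * e'⁻¹ := by
  have hc := hker (e'⁻¹ * e) (by simp [map_mul, map_inv, h]) f
  calc e * f * e⁻¹ = e' * ((e'⁻¹ * e) * f) * (e'⁻¹ * e)⁻¹ * e'⁻¹ := by group
    _ = e' * (f * (e'⁻¹ * e)) * (e'⁻¹ * e)⁻¹ * e'⁻¹ := by rw [hc]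
    _ = e' * f * e'⁻¹ := by group

private lemma comm_lift {E G : Type*} [Group E] [Group G] (pd : E →* G)
    (hker : ∀ e : E, pd e = 1 → ∀ f : E, e * f = f * e)
    {e e' f f' : E} (h1 : pd e = pd e') (h2 : pd f = pd f') :
    ⁅e, f⁆ = ⁅e', f'⁆ := by
  have ha : ⁅e, f⁆ = ⁅e', f⁆ := by
    simp only [commutatorElement_def]
    rw [show e * f * e⁻¹ * f⁻¹ = (e * f * e⁻¹) * f⁻¹ by group,
        conj_lift pd hker h1 f]
  have hb : ⁅e', f⁆ = ⁅e', f'⁆ := by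
    simp only [commutatorElement_def]
    rw [show e' * f * e'⁻¹ * f⁻¹ = e' * (f * e'⁻¹ * f⁻¹) by group,
        show e' * f' * e'⁻¹ * f'⁻¹ = e' * (f' * e'⁻¹ * f'⁻¹) by group,
        conj_lift pd hker h2 e'⁻¹]
  rw [ha, hb]


/-- Let `∂ : E → G` be a surjective group homomorphism whose kernel is
contained in the center of `E`, `s : G → E` a set-theoretic section of `∂`,
and `x ∈ G`.  With `φˣ(g,h) = ⁅s(h x⁻¹), s(g x⁻¹)⁆` and
`ψˣ(g,h) = ⁅s(g), s(h)⁆·⁅s(h g⁻¹), s(x)⁆`, the pair `(ψˣ, φˣ)` is an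
unframed Reidemeister pair for the crossed module `(∂ : E → G, ▷)`,
where `g ▷ e := s(g) e s(g)⁻¹`. -/
theorem central_extension_eisermann_lifting {E G : Type*}
    [Group E] [Group G] (pd : E →* G) (hsurj : Function.Surjective pd)
    (hker : ∀ e : E, pd e = 1 → ∀ f : E, e * f = f * e)
    (s : G → E) (hs : ∀ g, pd (s g) = g) (x : G) :
    IsUnframedReidemeisterPair pd (fun g e => s g * e * (s g)⁻¹)
      (fun g h => ⁅s g, s h⁆ * ⁅s (h * g⁻¹), s x⁆)
      (fun g h => ⁅s (h * x⁻¹), s (g * x⁻¹)⁆) := by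
  refine ⟨?_, ?_, ?_⟩
  · intro X
    dsimp only
    have h1 : ⁅s (X * X⁻¹), s x⁆ = ⁅(1 : E), s x⁆ :=
      comm_lift pd hker (by rw [hs]; simp) rfl
    rw [h1]
    simp
  · intro X Y
    dsimp only
    set a := s (X * x⁻¹) with ha'
    set b := s (Y * x⁻¹) with hb'
    set u := s x with hu'
    have ha : pd a = X * x⁻¹ := hs _
    have hb : pd b = Y * x⁻¹ := hs _
    have hu : pd u = x := hs _
    have h1 : ⁅s X, s (X⁻¹ * (pd ⁅b, a⁆)⁻¹ * Y * X)⁆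
        = ⁅a * u, u⁻¹ * b * a⁻¹ * u * a * u⁆ := by
      refine comm_lift pd hker ?_ ?_
      · rw [hs]; simp only [map_mul, ha, hu]; group
      · rw [hs]; simp only [commutatorElement_def, map_mul, map_inv, ha, hb, hu]; group
    have h2 : ⁅s (X⁻¹ * (pd ⁅b, a⁆)⁻¹ * Y * X * X⁻¹), s x⁆
        = ⁅u⁻¹ * b * a⁻¹ * u, u⁆ := by
      refine comm_lift pd hker ?_ ?_
      · rw [hs]; simp only [commutatorElement_def, map_mul, map_inv, ha, hb, hu]; group
      · rw [hs]
    rw [h1, h2]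
    simp only [commutatorElement_def]
    group
  · intro X Y T
    dsimp only
    set a := s (X * x⁻¹) with ha'
    set b := s (Y * x⁻¹) with hb'
    set t := s (T * x⁻¹) with ht'
    set u := s x with hu'
    have ha : pd a = X * x⁻¹ := hs _
    have hb : pd b = Y * x⁻¹ := hs _
    have ht : pd t = T * x⁻¹ := hs _
    have hu : pd u = x := hs _
    have hZ : ⁅s (Y⁻¹ * (pd ⁅a, b⁆)⁻¹ * X * Y * x⁻¹), t⁆
        = ⁅u⁻¹ * a * b⁻¹ * u * b, t⁆ := by
      refine comm_lift pd hker ?_ rfl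
      rw [hs]; simp only [commutatorElement_def, map_mul, map_inv, ha, hb, hu]; group
    have hVW : ⁅s (T⁻¹ * (pd ⁅a, t⁆)⁻¹ * X * T * x⁻¹),
          s (T⁻¹ * (pd ⁅b, t⁆)⁻¹ * Y * T * x⁻¹)⁆
        = ⁅u⁻¹ * a * t⁻¹ * u * t, u⁻¹ * b * t⁻¹ * u * t⁆ := by
      refine comm_lift pd hker ?_ ?_
      · rw [hs]; simp only [commutatorElement_def, map_mul, map_inv, ha, ht, hu]; group
      · rw [hs]; simp only [commutatorElement_def, map_mul, map_inv, hb, ht, hu]; group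
    have hY : pd (s Y) = pd (b * u) := by rw [hs]; simp only [map_mul, hb, hu]; group
    have hX : pd (s X) = pd (a * u) := by rw [hs]; simp only [map_mul, ha, hu]; group
    have hT : pd (s T) = pd (t * u) := by rw [hs]; simp only [map_mul, ht, hu]; group
    rw [hZ, hVW, conj_lift pd hker hY, conj_lift pd hker hX, conj_lift pd hker hT]
    simp only [commutatorElement_def]
    group
end
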